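/- Suppose x = y·u·z is square-free relative to π and belongs to Lin(n), and u ~ v. Then the word y·v·z also belongs to Lin(n). -/

import Mathlib

namespace SqFreePaper

variable {A : Type*}

/-- A word is square-free if it contains no nonempty factor of the form `s ++ s`. -/
def IsSquareFreeWord (w : List A) : Prop :=
  ∀ u s v : List A, w = u ++ s ++ s ++ v → s = []

/-- One-step rewriting relation associated with a system of defining relations `π`. -/
def OneStep (π : List A → List A → Prop) (x y : List A) : Prop :=
  ∃ r s u v : List A, x = r ++ u ++ s ∧ y = r ++ v ++ s ∧ (π u v ∨ π v u)

/-- The congruence `=_π` generated by `π`: reflexive-transitive closure of one-step rewriting. -/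
def EqRel (π : List A → List A → Prop) : List A → List A → Prop :=
  Relation.ReflTransGen (OneStep π)

/-- `w` is square-free relative to `π`: every word in its `=_π`-class is square-free. -/
def SFRel (π : List A → List A → Prop) (w : List A) : Prop :=
  ∀ z, EqRel π w z → IsSquareFreeWord z

/-- Union of two systems of defining relations. -/
def PiRel (σ ρ : List A → List A → Prop) (x y : List A) : Prop := σ x y ∨ ρ x y

/-- The set of defining words of a system `σ`. -/
def DWords (σ : List A → List A → Prop) : Set (List A) :=
  {x | ∃ y, σ x y ∨ σ y x}

/-- The closure of `D_σ` under the congruence `=_ρ`. -/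
def ClosureD (σ ρ : List A → List A → Prop) : Set (List A) :=
  {x | ∃ w ∈ DWords σ, EqRel ρ w x}

/-- The system `{(u_i, u_j) : i < j}` determined by a finite family of words. -/
def FamilyRel {n : ℕ} (u : Fin n → List A) (x y : List A) : Prop :=
  ∃ i j : Fin n, i < j ∧ x = u i ∧ y = u j

/-- `x ~ y` iff both lie in `D̄_σ` or both lie in `D̄_ρ`. -/
def Sim (σ ρ : List A → List A → Prop) (x y : List A) : Prop :=
  (x ∈ ClosureD σ ρ ∧ y ∈ ClosureD σ ρ) ∨ (x ∈ ClosureD ρ σ ∧ y ∈ ClosureD ρ σ)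

/-- `D_τ = D̄_σ ∪ D̄_ρ`. -/
def DTau (σ ρ : List A → List A → Prop) : Set (List A) :=
  ClosureD σ ρ ∪ ClosureD ρ σ

/-- The concatenation `x_a ++ x_{a+1} ++ ⋯ ++ x_{a+len-1}`. -/
def wordSeg (x : ℕ → List A) (a len : ℕ) : List A :=
  ((List.range' a len).map x).flatten

/-- Standing hypotheses of the paper: `D̄_σ`, `D̄_ρ` are finite, nonempty, disjoint,
and closed under `=_σ`, `=_ρ` respectively. -/
def SettingHyps (σ ρ : List A → List A → Prop) : Prop :=
  (ClosureD σ ρ).Finite ∧ (ClosureD ρ σ).Finite ∧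
  (ClosureD σ ρ).Nonempty ∧ (ClosureD ρ σ).Nonempty ∧
  (ClosureD σ ρ ∩ ClosureD ρ σ = ∅) ∧
  (∀ x ∈ ClosureD σ ρ, ∀ y, EqRel σ x y → y ∈ ClosureD σ ρ) ∧
  (∀ x ∈ ClosureD ρ σ, ∀ y, EqRel ρ x y → y ∈ ClosureD ρ σ)

/-- `x_1, …, x_n` (with complementary members `p_i`, `q_i`) is a linear decomposition. -/
def IsLinDecomp (σ ρ : List A → List A → Prop) (n : ℕ) (x p q : ℕ → List A) : Prop :=
  1 ≤ n ∧
  (∀ i, 1 ≤ i → i ≤ n → x i ≠ []) ∧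
  (∃ u v : ℕ → List A,
    (∀ i, 1 < i → i ≤ n → Sim σ ρ (p i ++ x i ++ q i) (q (i-1) ++ u i)) ∧
    (∀ i, 1 ≤ i → i < n → Sim σ ρ (p i ++ x i ++ q i) (v i ++ p (i+1)))) ∧
  (∀ i, 1 ≤ i → i < n → q i = [] ∨ p (i+1) = []) ∧
  p 1 = [] ∧ q n = [] ∧ (n = 1 → x 1 ∈ DTau σ ρ)

/-- `Lin(n)`: words with a linear decomposition of at most `n` members. -/
def LinSet (σ ρ : List A → List A → Prop) (n : ℕ) : Set (List A) :=
  {w | ∃ m, 1 ≤ m ∧ m ≤ n ∧ ∃ x p q, IsLinDecomp σ ρ m x p q ∧ w = wordSeg x 1 m}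

/-- `Lin = ⋃ₙ Lin(n)`: linearly decomposable words. -/
def LinAll (σ ρ : List A → List A → Prop) : Set (List A) :=
  {w | ∃ n, w ∈ LinSet σ ρ n}

/-- Occurrence `(r, d, s)` contains occurrence `(p, e, q)` (of the same word)
iff `|r| ≤ |p|` and `|s| ≤ |q|`. -/
def Contained (p q r s : List A) : Prop := r.length ≤ p.length ∧ s.length ≤ q.length

/-- Two occurrences in `w` overlap iff some occurrence of a nonempty word is
contained in both. -/
def Overlap (w p q r s : List A) : Prop :=
  ∃ a f b : List A, f ≠ [] ∧ w = a ++ f ++ b ∧ Contained a b p q ∧ Contained a b r s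

/-- `(p, e, q)` is a maximal occurrence in `w` of a word `e` in the set `L`. -/
def MaximalOcc (L : Set (List A)) (w p e q : List A) : Prop :=
  w = p ++ e ++ q ∧ e ∈ L ∧
  ∀ r d s, w = r ++ d ++ s → d ∈ L → Contained p q r s → r = p ∧ d = e ∧ s = q

/-!
Read `~` as `=_π` on `D_τ`: each of `D̄_σ`, `D̄_ρ` is a single `=_π`-class (`sim_iff`). A linear
decomposition then becomes a list of members `p_i x_i q_i` in which consecutive members are
`Linked`. Following the links, `x_1 ⋯ x_{k-1}` is `=_π` to a word ending in `p_k` and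
`x_{k+1} ⋯ x_m` to a word beginning with `q_k`, so every `p_k x_k q_k` can be exposed inside a word
`=_π` to `x`. Since `x` is square-free relative to `π`, adjacent members lie in different classes;
as `D_τ` has only two classes, `u` lies in the class of one of any two adjacent members.

If `u` lies inside one member, replace it there. Otherwise `x_a = αβ`, `x_b = γδ` and
`u = β x_{a+1} ⋯ x_{b-1} γ`; the members `x_a, …, x_b` give way to `α`, `v`, `δ` (empty ones
dropped), with complementary members `p_a, β q_a`, none, and `p_b γ, q_b`. Exposing `x_a` next to
its right neighbour shows that a nonempty `q_a` forces `u ~ p_a x_a q_a`, and exposing it after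
`x_1 ⋯ x_{a-1}` shows that this forces `α` to be empty; together these link `v` to its left
neighbour, and symmetrically on the right. Finally, when `b = a + 1`, `u` lies in the class of
`p_a x_a q_a` or of `p_b x_b q_b`, so `α` or `δ` is empty and the number of members does not grow.
-/

theorem OneStep.symm {π : List A → List A → Prop} {a b : List A} (h : OneStep π a b) :
    OneStep π b a := by
  obtain ⟨r, s, u, v, rfl, rfl, huv⟩ := h
  exact ⟨r, s, v, u, rfl, rfl, huv.symm⟩

theorem OneStep.append {π : List A → List A → Prop} {a b : List A} (l r : List A)
    (h : OneStep π a b) : OneStep π (l ++ a ++ r) (l ++ b ++ r) := by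
  obtain ⟨r', s', u, v, rfl, rfl, huv⟩ := h
  exact ⟨l ++ r', s' ++ r, u, v, by simp, by simp, huv⟩

namespace EqRel

variable {π : List A → List A → Prop} {a b c d : List A}

@[simp, refl] theorem refl (a : List A) : EqRel π a a := Relation.ReflTransGen.refl

theorem trans (h₁ : EqRel π a b) (h₂ : EqRel π b c) : EqRel π a c :=
  Relation.ReflTransGen.trans h₁ h₂

instance : Trans (EqRel π) (EqRel π) (EqRel π) := ⟨trans⟩

theorem symm (h : EqRel π a b) : EqRel π b a :=
  haveI : Std.Symm (OneStep π) := ⟨fun _ _ => OneStep.symm⟩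
  (Relation.ReflTransGen.stdSymm (r := OneStep π)).symm _ _ h

theorem of_rel (h : π a b) : EqRel π a b :=
  Relation.ReflTransGen.single ⟨[], [], a, b, by simp, by simp, Or.inl h⟩

theorem append (h₁ : EqRel π a b) (h₂ : EqRel π c d) : EqRel π (a ++ c) (b ++ d) := by
  have left : EqRel π (a ++ c) (b ++ c) :=
    Relation.ReflTransGen.lift (fun w => w ++ c)
      (fun _ _ h => by simpa using OneStep.append [] c h) _ _ h₁
  have right : EqRel π (b ++ c) (b ++ d) :=
    Relation.ReflTransGen.lift (fun w => b ++ w)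
      (fun _ _ h => by simpa using OneStep.append b [] h) _ _ h₂
  exact left.trans right

theorem append_left (l : List A) (h : EqRel π a b) : EqRel π (l ++ a) (l ++ b) :=
  (refl l).append h

theorem append_right (r : List A) (h : EqRel π a b) : EqRel π (a ++ r) (b ++ r) :=
  h.append (refl r)

theorem mono {π' : List A → List A → Prop} (hππ' : ∀ a b, π a b → π' a b)
    (h : EqRel π a b) : EqRel π' a b :=
  Relation.ReflTransGen.mono
    (fun _ _ ⟨r, s, u, v, h₁, h₂, h₃⟩ => ⟨r, s, u, v, h₁, h₂, h₃.imp (hππ' _ _) (hππ' _ _)⟩) _ _ h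

end EqRel

theorem SFRel.eq_nil {π : List A → List A → Prop} {w l s r : List A} (hsf : SFRel π w)
    (h : EqRel π w (l ++ s ++ s ++ r)) : s = [] :=
  hsf _ h l s r rfl

theorem SFRel.eq_nil_iff_eq_nil {π : List A → List A → Prop} {y u v z : List A}
    (hsf : SFRel π (y ++ u ++ z)) (huv : EqRel π u v) : u = [] ↔ v = [] := by
  constructor
  · rintro rfl
    refine hsf.eq_nil (l := y) (r := z) ?_
    calc EqRel π (y ++ [] ++ z) (y ++ v ++ z) := (huv.append_left y).append_right z
      EqRel π _ (y ++ v ++ v ++ z) := by simpa using ((huv.append_left (y ++ v)).append_right z)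
  · rintro rfl
    refine hsf.eq_nil (l := y) (r := z) ?_
    simpa using ((huv.symm.append_left (y ++ u)).append_right z)

def AtMostTwoClasses (π : List A → List A → Prop) (D : Set (List A)) : Prop :=
  ∀ a ∈ D, ∀ b ∈ D, ∀ c ∈ D, EqRel π a b ∨ EqRel π a c ∨ EqRel π b c

section Family

variable {σ ρ π : List A → List A → Prop}

theorem eqRel_of_mem_dWords {n : ℕ} {u : Fin n → List A} {a b : List A}
    (ha : a ∈ DWords (FamilyRel u)) (hb : b ∈ DWords (FamilyRel u)) :
    EqRel (FamilyRel u) a b := by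
  have word_of_mem : ∀ {d}, d ∈ DWords (FamilyRel u) → ∃ i, d = u i := by
    rintro d ⟨d', ⟨i, j, -, rfl, -⟩ | ⟨i, j, -, -, rfl⟩⟩ <;> exact ⟨_, rfl⟩
  obtain ⟨i, rfl⟩ := word_of_mem ha
  obtain ⟨j, rfl⟩ := word_of_mem hb
  rcases lt_trichotomy i j with hij | rfl | hij
  · exact EqRel.of_rel ⟨i, j, hij, rfl, rfl⟩
  · rfl
  · exact (EqRel.of_rel ⟨j, i, hij, rfl, rfl⟩).symm

theorem eqRel_of_mem_closureD {n : ℕ} {u : Fin n → List A} (hσ : σ = FamilyRel u)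
    (hπσ : ∀ a b, σ a b → π a b) (hπρ : ∀ a b, ρ a b → π a b) {a b : List A}
    (ha : a ∈ ClosureD σ ρ) (hb : b ∈ ClosureD σ ρ) : EqRel π a b := by
  obtain ⟨d, hd, hda⟩ := ha
  obtain ⟨d', hd', hd'b⟩ := hb
  subst hσ
  calc EqRel π a d := (hda.mono hπρ).symm
    EqRel π _ d' := (eqRel_of_mem_dWords hd hd').mono hπσ
    EqRel π _ b := hd'b.mono hπρ

theorem mem_closureD_of_eqRel
    (hclosed : ∀ a ∈ ClosureD σ ρ, ∀ b, EqRel σ a b → b ∈ ClosureD σ ρ)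
    (hπ : ∀ a b, π a b → σ a b ∨ ρ a b) {a b : List A} (ha : a ∈ ClosureD σ ρ)
    (h : EqRel π a b) : b ∈ ClosureD σ ρ := by
  induction h with
  | refl => exact ha
  | tail _ hstep ih =>
    obtain ⟨r, s, u, v, h₁, h₂, huv | hvu⟩ := hstep
    · rcases hπ _ _ huv with h | h
      · exact hclosed _ ih _ (.single ⟨r, s, u, v, h₁, h₂, .inl h⟩)
      · obtain ⟨d, hd, hdb⟩ := ih
        exact ⟨d, hd, hdb.tail ⟨r, s, u, v, h₁, h₂, .inl h⟩⟩
    · rcases hπ _ _ hvu with h | h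
      · exact hclosed _ ih _ (.single ⟨r, s, u, v, h₁, h₂, .inr h⟩)
      · obtain ⟨d, hd, hdb⟩ := ih
        exact ⟨d, hd, hdb.tail ⟨r, s, u, v, h₁, h₂, .inr h⟩⟩

theorem SettingHyps.mem_closureD_left {a b : List A} (hset : SettingHyps σ ρ)
    (ha : a ∈ ClosureD σ ρ) (h : EqRel (PiRel σ ρ) a b) : b ∈ ClosureD σ ρ :=
  mem_closureD_of_eqRel hset.2.2.2.2.2.1 (fun _ _ h => h) ha h

theorem SettingHyps.mem_closureD_right {a b : List A} (hset : SettingHyps σ ρ)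
    (ha : a ∈ ClosureD ρ σ) (h : EqRel (PiRel σ ρ) a b) : b ∈ ClosureD ρ σ :=
  mem_closureD_of_eqRel hset.2.2.2.2.2.2 (fun _ _ h => h.symm) ha h

theorem SettingHyps.mem_dTau {a b : List A} (hset : SettingHyps σ ρ) (ha : a ∈ DTau σ ρ)
    (h : EqRel (PiRel σ ρ) a b) : b ∈ DTau σ ρ :=
  ha.imp (hset.mem_closureD_left · h) (hset.mem_closureD_right · h)

theorem sim_iff {nu nv : ℕ} {u : Fin nu → List A} {v : Fin nv → List A}
    (hσ : σ = FamilyRel u) (hρ : ρ = FamilyRel v) (hset : SettingHyps σ ρ) {a b : List A} :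
    Sim σ ρ a b ↔ a ∈ DTau σ ρ ∧ EqRel (PiRel σ ρ) a b := by
  constructor
  · rintro (⟨ha, hb⟩ | ⟨ha, hb⟩)
    · exact ⟨.inl ha, eqRel_of_mem_closureD hσ (fun _ _ => .inl) (fun _ _ => .inr) ha hb⟩
    · exact ⟨.inr ha, eqRel_of_mem_closureD hρ (fun _ _ => .inr) (fun _ _ => .inl) ha hb⟩
  · rintro ⟨ha | ha, hab⟩
    · exact .inl ⟨ha, hset.mem_closureD_left ha hab⟩
    · exact .inr ⟨ha, hset.mem_closureD_right ha hab⟩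

theorem atMostTwoClasses_dTau {nu nv : ℕ} {u : Fin nu → List A} {v : Fin nv → List A}
    (hσ : σ = FamilyRel u) (hρ : ρ = FamilyRel v) :
    AtMostTwoClasses (PiRel σ ρ) (DTau σ ρ) := by
  intro a ha b hb c hc
  have hσ' : ∀ {a b}, a ∈ ClosureD σ ρ → b ∈ ClosureD σ ρ → EqRel (PiRel σ ρ) a b :=
    eqRel_of_mem_closureD hσ (fun _ _ => .inl) (fun _ _ => .inr)
  have hρ' : ∀ {a b}, a ∈ ClosureD ρ σ → b ∈ ClosureD ρ σ → EqRel (PiRel σ ρ) a b :=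
    eqRel_of_mem_closureD hρ (fun _ _ => .inr) (fun _ _ => .inl)
  rcases ha with ha | ha <;> rcases hb with hb | hb <;> rcases hc with hc | hc
  all_goals first
    | exact .inl (hσ' ha hb) | exact .inl (hρ' ha hb)
    | exact .inr (.inl (hσ' ha hc)) | exact .inr (.inl (hρ' ha hc))
    | exact .inr (.inr (hσ' hb hc)) | exact .inr (.inr (hρ' hb hc))

end Family

theorem isChain_append_singleton_of_imp {α : Type*} {R : α → α → Prop} {K : List α} {s s' : α}
    (h : (K ++ [s]).IsChain R) (hl : ∀ r, R r s → R r s') : (K ++ [s']).IsChain R := by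
  rw [List.isChain_append] at h ⊢
  refine ⟨h.1, .singleton _, fun x hx y hy => ?_⟩
  obtain rfl : s' = y := by simpa using hy
  exact hl x (h.2.2 x hx s (by simp))

theorem isChain_append_cons_of_imp {α : Type*} {R : α → α → Prop} {K K' : List α} {s s' : α}
    (h : (K ++ s :: K').IsChain R) (hl : ∀ r, R r s → R r s') (hr : ∀ r, R s r → R s' r) :
    (K ++ s' :: K').IsChain R := by
  rw [List.isChain_split] at h ⊢
  exact ⟨isChain_append_singleton_of_imp h.1 hl, h.2.imp_head (hr _)⟩

/-- A member `x_i` of a linear decomposition with its complementary members `p_i`, `q_i`. -/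
structure Block (A : Type*) where
  pre : List A
  body : List A
  post : List A

def Block.word (t : Block A) : List A := t.pre ++ t.body ++ t.post

@[simps] def Block.bare (v : List A) : Block A := ⟨[], v, []⟩

def Block.dropEmpty (t : Block A) : List (Block A) := if t.body.isEmpty then [] else [t]

def flat (L : List (Block A)) : List A := (L.map Block.body).flatten

@[simp] theorem flat_nil : flat ([] : List (Block A)) = [] := rfl

@[simp] theorem flat_cons (t : Block A) (L : List (Block A)) :
    flat (t :: L) = t.body ++ flat L := by
  simp [flat]

@[simp] theorem flat_append (L L' : List (Block A)) : flat (L ++ L') = flat L ++ flat L' := by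
  simp [flat]

/-- The conditions a linear decomposition imposes on two consecutive members, with `~` read as
`=_π` (the two agree on words of `D_τ`, see `sim_iff`). -/
def Linked (π : List A → List A → Prop) (s t : Block A) : Prop :=
  (∃ r, EqRel π t.word (s.post ++ r)) ∧ (∃ r, EqRel π s.word (r ++ t.pre)) ∧
    (s.post = [] ∨ t.pre = [])

structure IsLinChain (π : List A → List A → Prop) (D : Set (List A)) (L : List (Block A)) :
    Prop where
  ne_nil : L ≠ []
  body_ne_nil : ∀ t ∈ L, t.body ≠ []
  word_mem : ∀ t ∈ L, t.word ∈ D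
  isChain : L.IsChain (Linked π)
  head_pre : ∀ t ∈ L.head?, t.pre = []
  getLast_post : ∀ t ∈ L.getLast?, t.post = []

section Exposure

variable {π : List A → List A → Prop} {D : Set (List A)}

theorem exists_eqRel_flat_post_of_isChain {t : Block A} {K : List (Block A)}
    (hK : (t :: K).IsChain (Linked π)) (hlast : ∀ r ∈ (t :: K).getLast?, r.post = []) :
    ∃ S, EqRel π (flat K) (t.post ++ S) := by
  induction K generalizing t with
  | nil => exact ⟨[], by simp_all⟩
  | cons t' K ih =>
    rw [List.isChain_cons_cons] at hK
    obtain ⟨⟨⟨r, hr⟩, -, hd⟩, hK⟩ := hK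
    obtain ⟨S, hS⟩ := ih hK (by simpa using hlast)
    rcases eq_or_ne t.post [] with h | h
    · exact ⟨flat (t' :: K), by simp [h]⟩
    · refine ⟨r ++ S, ?_⟩
      calc EqRel π (flat (t' :: K)) (t'.word ++ S) := by
            simpa [Block.word, hd.resolve_left h] using hS.append_left t'.body
        EqRel π _ (t.post ++ (r ++ S)) := by simpa using hr.append_right S

theorem exists_eqRel_flat_pre_of_isChain {t : Block A} {K : List (Block A)}
    (hK : (K ++ [t]).IsChain (Linked π)) (hhead : ∀ r ∈ (K ++ [t]).head?, r.pre = []) :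
    ∃ W, EqRel π (flat K) (W ++ t.pre) := by
  induction K using List.reverseRecOn generalizing t with
  | nil => exact ⟨[], by simp_all⟩
  | append_singleton K t' ih =>
    rw [List.isChain_append] at hK
    obtain ⟨hK, -, hlink⟩ := hK
    obtain ⟨-, ⟨r, hr⟩, hd⟩ := hlink t' (by simp) t (by simp)
    obtain ⟨W, hW⟩ := ih hK (by simpa [List.head?_append] using hhead)
    rcases eq_or_ne t.pre [] with h | h
    · exact ⟨flat (K ++ [t']), by simp [h]⟩
    · refine ⟨W ++ r, ?_⟩
      calc EqRel π (flat (K ++ [t'])) (W ++ t'.word) := by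
            simpa [Block.word, hd.resolve_right h] using hW.append_right t'.body
        EqRel π _ (W ++ r ++ t.pre) := by simpa using hr.append_left W

theorem IsLinChain.exists_eqRel_flat_pre {L K K' : List (Block A)} {t : Block A}
    (hL : IsLinChain π D L) (h : L = K ++ t :: K') : ∃ W, EqRel π (flat K) (W ++ t.pre) := by
  subst h
  refine exists_eqRel_flat_pre_of_isChain (hL.isChain.infix ⟨[], K', by simp⟩) ?_
  simpa [List.head?_append] using hL.head_pre

theorem IsLinChain.exists_eqRel_flat_post {L K K' : List (Block A)} {t : Block A}
    (hL : IsLinChain π D L) (h : L = K ++ t :: K') : ∃ S, EqRel π (flat K') (t.post ++ S) := by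
  subst h
  refine exists_eqRel_flat_post_of_isChain (hL.isChain.infix ⟨K, [], by simp⟩) ?_
  simpa [List.getLast?_append] using hL.getLast_post

end Exposure

section Adjacent

variable {π : List A → List A → Prop} {D : Set (List A)} {L K K' : List (Block A)}
  {s t : Block A} {u α β γ δ U Z : List A}

theorem IsLinChain.linked (hL : IsLinChain π D L) (h : L = K ++ s :: t :: K') :
    Linked π s t :=
  List.isChain_pair.mp (hL.isChain.infix ⟨K, K', by simp [h]⟩)

theorem IsLinChain.exists_eqRel_flat_adjacent (hL : IsLinChain π D L)
    (h : L = K ++ s :: t :: K') :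
    ∃ W S, EqRel π (flat L) (W ++ s.pre ++ s.body ++ t.body ++ t.post ++ S) := by
  obtain ⟨W, hW⟩ := hL.exists_eqRel_flat_pre h
  obtain ⟨S, hS⟩ := hL.exists_eqRel_flat_post (K := K ++ [s]) (t := t) (K' := K') (by simp [h])
  refine ⟨W, S, ?_⟩
  subst h
  simpa using (hW.append_right (s.body ++ t.body)).append hS

/-- After exposing both members, replacing one by the other would create a square. -/
theorem IsLinChain.not_eqRel_word_of_adjacent (hL : IsLinChain π D L)
    (h : L = K ++ s :: t :: K') (hsf : SFRel π (flat L)) : ¬ EqRel π s.word t.word := by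
  intro hst
  obtain ⟨W, S, hexp⟩ := hL.exists_eqRel_flat_adjacent h
  rcases (hL.linked h).2.2 with hs | ht
  · have hsq : t.body ++ t.post = [] := hsf.eq_nil (l := W ++ t.pre) (r := S) <| calc
      EqRel π (flat L) (W ++ s.word ++ (t.body ++ t.post) ++ S) := by
        simpa [Block.word, hs] using hexp
      EqRel π _ (W ++ t.word ++ (t.body ++ t.post) ++ S) :=
        ((hst.append_left W).append_right _).append_right S
      _ = _ := by simp [Block.word]
    exact hL.body_ne_nil t (by simp [h]) (List.append_eq_nil_iff.mp hsq).1
  · have hsq : s.pre ++ s.body = [] := hsf.eq_nil (l := W) (r := s.post ++ S) <| calc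
      EqRel π (flat L) (W ++ (s.pre ++ s.body) ++ t.word ++ S) := by
        simpa [Block.word, ht] using hexp
      EqRel π _ (W ++ (s.pre ++ s.body) ++ s.word ++ S) :=
        ((hst.symm.append_left _).append_right S)
      _ = _ := by simp [Block.word]
    exact hL.body_ne_nil s (by simp [h]) (List.append_eq_nil_iff.mp hsq).2

theorem IsLinChain.eqRel_word_or_eqRel_word
    (hD₂ : AtMostTwoClasses π D)
    (hL : IsLinChain π D L) (h : L = K ++ s :: t :: K') (hsf : SFRel π (flat L)) (hu : u ∈ D) :
    EqRel π u s.word ∨ EqRel π u t.word := by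
  rcases hD₂ u hu s.word (hL.word_mem s (by simp [h])) t.word (hL.word_mem t (by simp [h]))
    with hus | hut | hst
  · exact .inl hus
  · exact .inr hut
  · exact absurd hst (hL.not_eqRel_word_of_adjacent h hsf)

theorem IsLinChain.eqRel_word_of_post_ne_nil
    (hD₂ : AtMostTwoClasses π D)
    (hL : IsLinChain π D L) (h : L = K ++ s :: t :: K') (hsf : SFRel π (flat L)) (hu : u ∈ D)
    (hs : s.body = α ++ β) (hβ : β ≠ []) (huβ : u = β ++ U) (hpost : s.post ≠ []) :
    EqRel π u s.word := by
  refine (hL.eqRel_word_or_eqRel_word hD₂ h hsf hu).resolve_right fun hut => hβ ?_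
  have ht : t.pre = [] := (hL.linked h).2.2.resolve_left hpost
  obtain ⟨W, S, hexp⟩ := hL.exists_eqRel_flat_adjacent h
  refine hsf.eq_nil (l := W ++ s.pre ++ α) (r := U ++ S) <| calc
    EqRel π (flat L) (W ++ s.pre ++ α ++ β ++ t.word ++ S) := by
      simpa [Block.word, hs, ht] using hexp
    EqRel π _ (W ++ s.pre ++ α ++ β ++ u ++ S) := (hut.symm.append_left _).append_right S
    _ = _ := by simp [huβ]

theorem IsLinChain.eqRel_word_of_pre_ne_nil
    (hD₂ : AtMostTwoClasses π D)
    (hL : IsLinChain π D L) (h : L = K ++ s :: t :: K') (hsf : SFRel π (flat L)) (hu : u ∈ D)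
    (ht : t.body = γ ++ δ) (hγ : γ ≠ []) (huγ : u = U ++ γ) (hpre : t.pre ≠ []) :
    EqRel π u t.word := by
  refine (hL.eqRel_word_or_eqRel_word hD₂ h hsf hu).resolve_left fun hus => hγ ?_
  have hs : s.post = [] := (hL.linked h).2.2.resolve_right hpre
  obtain ⟨W, S, hexp⟩ := hL.exists_eqRel_flat_adjacent h
  refine hsf.eq_nil (l := W ++ U) (r := δ ++ t.post ++ S) <| calc
    EqRel π (flat L) (W ++ s.word ++ (γ ++ δ ++ t.post ++ S)) := by
      simpa [Block.word, hs, ht] using hexp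
    EqRel π _ (W ++ u ++ (γ ++ δ ++ t.post ++ S)) := (hus.symm.append_left W).append_right _
    _ = _ := by simp [huγ]

theorem IsLinChain.not_eqRel_word_of_prefix_ne_nil (hL : IsLinChain π D L)
    (h : L = K ++ s :: K') (hs : s.body = α ++ β) (hα : α ≠ [])
    (hsf : SFRel π (flat K ++ α ++ u ++ Z)) : ¬ EqRel π u s.word := by
  intro hus
  obtain ⟨W, hW⟩ := hL.exists_eqRel_flat_pre h
  have hsq : s.pre ++ α = [] := hsf.eq_nil (l := W) (r := β ++ s.post ++ Z) <| calc
    EqRel π (flat K ++ α ++ u ++ Z) (W ++ s.pre ++ α ++ s.word ++ Z) :=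
      (((hW.append_right α).append hus).append_right Z)
    _ = _ := by simp [Block.word, hs]
  exact hα (List.append_eq_nil_iff.mp hsq).2

theorem IsLinChain.not_eqRel_word_of_suffix_ne_nil (hL : IsLinChain π D L)
    (h : L = K ++ t :: K') (ht : t.body = γ ++ δ) (hδ : δ ≠ [])
    (hsf : SFRel π (Z ++ u ++ δ ++ flat K')) : ¬ EqRel π u t.word := by
  intro hut
  obtain ⟨S, hS⟩ := hL.exists_eqRel_flat_post h
  have hsq : δ ++ t.post = [] := hsf.eq_nil (l := Z ++ t.pre ++ γ) (r := S) <| calc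
    EqRel π (Z ++ u ++ δ ++ flat K') (Z ++ t.word ++ δ ++ (t.post ++ S)) :=
      ((hut.append_left Z).append_right δ).append hS
    _ = _ := by simp [Block.word, ht]
  exact hδ (List.append_eq_nil_iff.mp hsq).1

end Adjacent

theorem exists_split_of_flat_eq_append {L : List (Block A)} {y w : List A}
    (h : flat L = y ++ w) (hw : w ≠ []) :
    ∃ K s K' α β, L = K ++ s :: K' ∧ s.body = α ++ β ∧ β ≠ [] ∧
      y = flat K ++ α ∧ w = β ++ flat K' := by
  induction L generalizing y with
  | nil => exact absurd (List.append_eq_nil_iff.mp h.symm).2 hw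
  | cons t L ih =>
    have hcases : (∃ a, y = t.body ++ a ∧ flat L = a ++ w) ∨
        ∃ c, c ≠ [] ∧ t.body = y ++ c ∧ w = c ++ flat L := by
      rcases List.append_eq_append_iff.mp (by simpa using h) with ⟨a, h₁, h₂⟩ | ⟨c, h₁, h₂⟩
      · exact .inl ⟨a, h₁, h₂⟩
      · rcases eq_or_ne c [] with rfl | hc
        · exact .inl ⟨[], by simpa using h₁.symm, by simpa using h₂.symm⟩
        · exact .inr ⟨c, hc, h₁, h₂⟩
    rcases hcases with ⟨a, rfl, ha⟩ | ⟨c, hc, h₁, rfl⟩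
    · obtain ⟨K, s, K', α, β, rfl, hs, hβ, rfl, rfl⟩ := ih ha
      exact ⟨t :: K, s, K', α, β, rfl, hs, hβ, by simp, rfl⟩
    · exact ⟨[], t, L, y, c, rfl, h₁, hc, by simp, rfl⟩

theorem exists_split_of_flat_eq_append' {L : List (Block A)} {w z : List A}
    (h : flat L = w ++ z) (hw : w ≠ []) :
    ∃ K t K' γ δ, L = K ++ t :: K' ∧ t.body = γ ++ δ ∧ γ ≠ [] ∧
      w = flat K ++ γ ∧ z = δ ++ flat K' := by
  induction L generalizing w with
  | nil => exact absurd (List.append_eq_nil_iff.mp h.symm).1 hw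
  | cons t L ih =>
    rcases List.append_eq_append_iff.mp (by simpa using h) with ⟨a, rfl, ha⟩ | ⟨c, h₁, rfl⟩
    · rcases eq_or_ne a [] with rfl | ha'
      · exact ⟨[], t, L, t.body, [], rfl, by simp, by simpa using hw, by simp,
          by simpa using ha.symm⟩
      · obtain ⟨K, t', K', γ, δ, rfl, ht, hγ, rfl, rfl⟩ := ih ha ha'
        exact ⟨t :: K, t', K', γ, δ, rfl, ht, hγ, by simp, rfl⟩
    · exact ⟨[], t, L, w, c, rfl, h₁, hw, by simp, rfl⟩

theorem exists_of_flat_eq_append_append {L : List (Block A)} {y u z : List A}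
    (h : flat L = y ++ u ++ z) (hu : u ≠ []) :
    (∃ K s K' α δ, L = K ++ s :: K' ∧ s.body = α ++ u ++ δ ∧
      y = flat K ++ α ∧ z = δ ++ flat K') ∨
    (∃ K s M t K' α β γ δ, L = K ++ s :: (M ++ t :: K') ∧ s.body = α ++ β ∧
      t.body = γ ++ δ ∧ β ≠ [] ∧ γ ≠ [] ∧ u = β ++ flat M ++ γ ∧
      y = flat K ++ α ∧ z = δ ++ flat K') := by
  obtain ⟨K, s, K₁, α, β, rfl, hs, hβ, rfl, huz⟩ :=
    exists_split_of_flat_eq_append (w := u ++ z) (by simpa using h) (by simp [hu])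
  obtain ⟨K₂, t, K', γ, δ, hK, ht, hγ, rfl, rfl⟩ :=
    exists_split_of_flat_eq_append' (L := Block.bare β :: K₁) (by simpa using huz.symm) hu
  cases K₂ with
  | nil =>
    obtain ⟨rfl, rfl⟩ := List.cons.inj hK
    exact .inl ⟨K, s, K₁, α, δ, rfl, by simp [hs, ← ht], by simp, rfl⟩
  | cons t₀ M =>
    obtain ⟨rfl, rfl⟩ := List.cons.inj hK
    exact .inr ⟨K, s, M, t, K', α, β, γ, δ, rfl, hs, ht, hβ, hγ, by simp, by simp, rfl⟩

section Replace

variable {π : List A → List A → Prop} {D : Set (List A)} {L K K' : List (Block A)}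
  {r s s' : Block A} {v : List A}

theorem Linked.congr_right (h : Linked π r s) (hpre : s'.pre = s.pre)
    (hw : EqRel π s.word s'.word) : Linked π r s' := by
  obtain ⟨⟨x, hx⟩, ⟨y, hy⟩, hd⟩ := h
  exact ⟨⟨x, hw.symm.trans hx⟩, ⟨y, hpre ▸ hy⟩, hpre ▸ hd⟩

theorem Linked.congr_left (h : Linked π s r) (hpost : s'.post = s.post)
    (hw : EqRel π s.word s'.word) : Linked π s' r := by
  obtain ⟨⟨x, hx⟩, ⟨y, hy⟩, hd⟩ := h
  exact ⟨⟨x, hpost ▸ hx⟩, ⟨y, hw.symm.trans hy⟩, hpost ▸ hd⟩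

theorem linked_bare_right_iff :
    Linked π r (Block.bare v) ↔ ∃ w, EqRel π v (r.post ++ w) := by
  refine ⟨fun h => by simpa [Block.word] using h.1,
    fun h => ⟨by simpa [Block.word] using h, ⟨r.word, by simp⟩, .inr rfl⟩⟩

theorem linked_bare_left_iff :
    Linked π (Block.bare v) r ↔ ∃ w, EqRel π v (w ++ r.pre) := by
  refine ⟨fun h => by simpa [Block.word] using h.2.1,
    fun h => ⟨⟨r.word, by simp⟩, by simpa [Block.word] using h, .inl rfl⟩⟩

theorem IsLinChain.replace_body (hD : ∀ a ∈ D, ∀ b, EqRel π a b → b ∈ D)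
    (hL : IsLinChain π D L) (h : L = K ++ s :: K') {b : List A} (hb : b ≠ [])
    (hsb : EqRel π s.body b) : IsLinChain π D (K ++ ⟨s.pre, b, s.post⟩ :: K') := by
  have hw : EqRel π s.word (⟨s.pre, b, s.post⟩ : Block A).word :=
    (hsb.append_left _).append_right _
  subst h
  refine ⟨by simp, ?_, ?_, ?_, ?_, ?_⟩
  · intro t ht
    simp only [List.mem_append, List.mem_cons] at ht
    rcases ht with ht | rfl | ht
    · exact hL.body_ne_nil t (by simp [ht])
    · exact hb
    · exact hL.body_ne_nil t (by simp [ht])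
  · intro t ht
    simp only [List.mem_append, List.mem_cons] at ht
    rcases ht with ht | rfl | ht
    · exact hL.word_mem t (by simp [ht])
    · exact hD _ (hL.word_mem s (by simp)) _ hw
    · exact hL.word_mem t (by simp [ht])
  · exact isChain_append_cons_of_imp hL.isChain (fun _ hr => hr.congr_right rfl hw)
      (fun _ hr => hr.congr_left rfl hw)
  · cases K <;> simpa using hL.head_pre
  · rcases K'.eq_nil_or_concat with rfl | ⟨K'', r, rfl⟩ <;>
      simpa [List.getLast?_cons] using hL.getLast_post

end Replace

section Span

variable {π : List A → List A → Prop} {D : Set (List A)} {L K K' M Kl Kr : List (Block A)}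
  {r s s' t : Block A} {v : List A}

theorem Block.mem_dropEmpty : r ∈ t.dropEmpty ↔ r = t ∧ t.body ≠ [] := by
  by_cases h : t.body = [] <;> simp [Block.dropEmpty, h]

@[simp] theorem Block.flat_dropEmpty : flat t.dropEmpty = t.body := by
  by_cases h : t.body = [] <;> simp [Block.dropEmpty, h]

theorem Block.length_dropEmpty_le : t.dropEmpty.length ≤ 1 := by
  by_cases h : t.body = [] <;> simp [Block.dropEmpty, h]

theorem Block.dropEmpty_of_body_eq_nil (h : t.body = []) : t.dropEmpty = [] := by
  simp [Block.dropEmpty, h]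

theorem isChain_append_dropEmpty (h : (K ++ [s]).IsChain (Linked π)) (hpre : s'.pre = s.pre)
    (hw : s'.word = s.word) : (K ++ s'.dropEmpty).IsChain (Linked π) := by
  by_cases hb : s'.body = []
  · simpa [Block.dropEmpty, hb] using h.left_of_append
  · simpa [Block.dropEmpty, hb] using
      isChain_append_singleton_of_imp h (fun _ hr => hr.congr_right hpre (by rw [hw]))

theorem isChain_dropEmpty_append (h : (t :: K').IsChain (Linked π)) (hpost : s'.post = t.post)
    (hw : s'.word = t.word) : (s'.dropEmpty ++ K').IsChain (Linked π) := by
  by_cases hb : s'.body = []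
  · simpa [Block.dropEmpty, hb] using h.tail
  · simpa [Block.dropEmpty, hb] using h.imp_head (fun hr => hr.congr_left hpost (by rw [hw]))

theorem isLinChain_append_bare_cons (hv : v ≠ []) (hvD : v ∈ D)
    (hl : Kl.IsChain (Linked π)) (hr : Kr.IsChain (Linked π))
    (hmem : ∀ x ∈ Kl ++ Kr, x.body ≠ [] ∧ x.word ∈ D)
    (hhead : ∀ x ∈ Kl.head?, x.pre = []) (hlast : ∀ x ∈ Kr.getLast?, x.post = [])
    (hjl : ∀ x ∈ Kl.getLast?, Linked π x (Block.bare v))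
    (hjr : ∀ x ∈ Kr.head?, Linked π (Block.bare v) x) :
    IsLinChain π D (Kl ++ Block.bare v :: Kr) := by
  refine ⟨by simp, fun x hx => ?_, fun x hx => ?_, ?_, ?_, ?_⟩
  · simp only [List.mem_append, List.mem_cons] at hx
    rcases hx with hx | rfl | hx
    · exact (hmem x (by simp [hx])).1
    · exact hv
    · exact (hmem x (by simp [hx])).1
  · simp only [List.mem_append, List.mem_cons] at hx
    rcases hx with hx | rfl | hx
    · exact (hmem x (by simp [hx])).2
    · simpa [Block.word] using hvD
    · exact (hmem x (by simp [hx])).2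
  · rw [List.isChain_append, List.isChain_cons]
    refine ⟨hl, ⟨hjr, hr⟩, fun x hx y hy => ?_⟩
    obtain rfl : Block.bare v = y := by simpa using hy
    exact hjl x hx
  · cases Kl <;> simp_all 
  · rcases Kr.eq_nil_or_concat with rfl | ⟨Kr, x, rfl⟩ <;>
      simp_all [List.getLast?_cons]

theorem IsLinChain.replace_span (hL : IsLinChain π D L) (h : L = K ++ s :: (M ++ t :: K'))
    {α β γ δ : List A} (hs : s.body = α ++ β) (ht : t.body = γ ++ δ) (hv : v ≠ []) (hvD : v ∈ D)
    (hjl : ∀ x ∈ (K ++ (⟨s.pre, α, β ++ s.post⟩ : Block A).dropEmpty).getLast?,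
      Linked π x (Block.bare v))
    (hjr : ∀ x ∈ ((⟨t.pre ++ γ, δ, t.post⟩ : Block A).dropEmpty ++ K').head?,
      Linked π (Block.bare v) x) :
    IsLinChain π D (K ++ (⟨s.pre, α, β ++ s.post⟩ : Block A).dropEmpty ++
      Block.bare v :: ((⟨t.pre ++ γ, δ, t.post⟩ : Block A).dropEmpty ++ K')) := by
  subst h
  have hsw : (⟨s.pre, α, β ++ s.post⟩ : Block A).word = s.word := by simp [Block.word, hs]
  have htw : (⟨t.pre ++ γ, δ, t.post⟩ : Block A).word = t.word := by simp [Block.word, ht]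
  refine isLinChain_append_bare_cons hv hvD
    (isChain_append_dropEmpty (s := s) (hL.isChain.infix ⟨[], M ++ t :: K', by simp⟩) rfl hsw)
    (isChain_dropEmpty_append (t := t) (hL.isChain.infix ⟨K ++ s :: M, [], by simp⟩) rfl htw)
    (fun x hx => ?_) (fun x hx => ?_) (fun x hx => ?_) hjl hjr
  · simp only [List.mem_append, Block.mem_dropEmpty] at hx
    rcases hx with (hx | ⟨rfl, hα⟩) | (⟨rfl, hδ⟩ | hx)
    · exact ⟨hL.body_ne_nil x (by simp [hx]), hL.word_mem x (by simp [hx])⟩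
    · exact ⟨hα, hsw ▸ hL.word_mem s (by simp)⟩
    · exact ⟨hδ, htw ▸ hL.word_mem t (by simp)⟩
    · exact ⟨hL.body_ne_nil x (by simp [hx]), hL.word_mem x (by simp [hx])⟩
  · cases K with
    | nil =>
      obtain ⟨rfl, -⟩ := Block.mem_dropEmpty.mp (List.mem_of_mem_head? (by simpa using hx))
      exact hL.head_pre s (by simp)
    | cons k K => exact hL.head_pre x (by simpa using hx)
  · rcases K'.eq_nil_or_concat with rfl | ⟨K', k, rfl⟩
    · obtain ⟨rfl, -⟩ := Block.mem_dropEmpty.mp (List.mem_of_mem_getLast? (by simpa using hx))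
      exact hL.getLast_post t (by simp [List.getLast?_cons])
    · exact hL.getLast_post x (by simpa [List.getLast?_cons] using hx)

theorem length_replace_span_le {α β γ δ : List A} (hM : α ≠ [] → δ ≠ [] → M ≠ []) :
    (K ++ (⟨s.pre, α, β ++ s.post⟩ : Block A).dropEmpty ++
      Block.bare v :: ((⟨t.pre ++ γ, δ, t.post⟩ : Block A).dropEmpty ++ K')).length ≤
    (K ++ s :: (M ++ t :: K')).length := by
  have hA := (⟨s.pre, α, β ++ s.post⟩ : Block A).length_dropEmpty_le
  have hΔ := (⟨t.pre ++ γ, δ, t.post⟩ : Block A).length_dropEmpty_le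
  simp only [List.length_append, List.length_cons]
  by_cases hα : α = []
  · rw [Block.dropEmpty_of_body_eq_nil hα, List.length_nil]
    omega
  by_cases hδ : δ = []
  · rw [Block.dropEmpty_of_body_eq_nil (t := ⟨t.pre ++ γ, δ, t.post⟩) hδ, List.length_nil]
    omega
  have := List.length_pos_of_ne_nil (hM hα hδ)
  omega

end Span

section Junction

variable {π : List A → List A → Prop} {D : Set (List A)} {L K K' M : List (Block A)}
  {s t : Block A} {u v α β γ δ : List A}

theorem IsLinChain.left_linked_bare
    (hD₂ : AtMostTwoClasses π D)
    (hL : IsLinChain π D L) (h : L = K ++ s :: (M ++ t :: K')) (hsf : SFRel π (flat L))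
    (hs : s.body = α ++ β) (ht : t.body = γ ++ δ) (hβ : β ≠ []) (hu : u ∈ D)
    (hu_eq : u = β ++ flat M ++ γ) (huv : EqRel π u v) :
    ∀ x ∈ (K ++ (⟨s.pre, α, β ++ s.post⟩ : Block A).dropEmpty).getLast?,
      Linked π x (Block.bare v) := by
  obtain ⟨s₂, K₂, hK₂⟩ : ∃ s₂ K₂, M ++ t :: K' = s₂ :: K₂ := by cases M <;> simp
  have hsu : s.post ≠ [] → EqRel π u s.word :=
    hL.eqRel_word_of_post_ne_nil hD₂ (by rw [h, hK₂]) hsf hu hs hβ (U := flat M ++ γ)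
      (by simp [hu_eq])
  intro x hx
  rw [linked_bare_right_iff]
  by_cases hα : α = []
  · subst hα
    obtain ⟨K₀, rfl⟩ := List.getLast?_eq_some_iff.mp
      (by simpa [Block.dropEmpty_of_body_eq_nil] using hx)
    have hxs : Linked π x s := hL.linked (K := K₀) (K' := M ++ t :: K') (by simp [h])
    by_cases hpost : s.post = []
    · obtain ⟨w, hw⟩ := exists_eqRel_flat_post_of_isChain (K := [s])
        (List.isChain_pair.mpr hxs) (by simpa using hpost)
      refine ⟨w ++ flat M ++ γ, ?_⟩
      calc EqRel π v (s.body ++ (flat M ++ γ)) := by simpa [hu_eq, hs] using huv.symm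
        EqRel π _ (x.post ++ w ++ (flat M ++ γ)) := by simpa using hw.append_right (flat M ++ γ)
        _ = _ := by simp
    · obtain ⟨w, hw⟩ := hxs.1
      exact ⟨w, huv.symm.trans ((hsu hpost).trans hw)⟩
  · have hpost : s.post = [] := by
      by_contra hpost
      refine hL.not_eqRel_word_of_prefix_ne_nil h hs hα (u := u) (Z := δ ++ flat K') ?_
        (hsu hpost)
      simpa [h, hs, ht, hu_eq] using hsf
    obtain rfl : x = ⟨s.pre, α, β ++ s.post⟩ := by
      simpa [Block.dropEmpty, hα, List.getLast?_append] using hx.symm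
    exact ⟨flat M ++ γ, by simpa [hu_eq, hpost] using huv.symm⟩

theorem IsLinChain.bare_linked_right
    (hD₂ : AtMostTwoClasses π D)
    (hL : IsLinChain π D L) (h : L = K ++ s :: (M ++ t :: K')) (hsf : SFRel π (flat L))
    (hs : s.body = α ++ β) (ht : t.body = γ ++ δ) (hγ : γ ≠ []) (hu : u ∈ D)
    (hu_eq : u = β ++ flat M ++ γ) (huv : EqRel π u v) :
    ∀ x ∈ ((⟨t.pre ++ γ, δ, t.post⟩ : Block A).dropEmpty ++ K').head?,
      Linked π (Block.bare v) x := by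
  obtain ⟨K₂, t₀, hK₂⟩ : ∃ K₂ t₀, K ++ s :: M = K₂ ++ [t₀] := by
    rcases (K ++ s :: M).eq_nil_or_concat with h' | ⟨K₂, t₀, h'⟩
    · simp at h'
    · exact ⟨K₂, t₀, by simpa using h'⟩
  have htu : t.pre ≠ [] → EqRel π u t.word :=
    hL.eqRel_word_of_pre_ne_nil hD₂ (K := K₂) (s := t₀) (K' := K')
      (by rw [h, show K ++ s :: (M ++ t :: K') = K ++ s :: M ++ t :: K' by simp, hK₂]; simp)
      hsf hu ht hγ
      (U := β ++ flat M) (by simp [hu_eq])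
  intro x hx
  rw [linked_bare_left_iff]
  by_cases hδ : δ = []
  · subst hδ
    obtain ⟨K₃, rfl⟩ := List.head?_eq_some_iff.mp
      (by simpa [Block.dropEmpty_of_body_eq_nil] using hx)
    have htx : Linked π t x := hL.linked (K := K ++ s :: M) (K' := K₃) (by simp [h])
    by_cases hpre : t.pre = []
    · obtain ⟨w, hw⟩ := exists_eqRel_flat_pre_of_isChain (K := [t])
        (List.isChain_pair.mpr htx) (by simpa using hpre)
      refine ⟨β ++ flat M ++ w, ?_⟩
      calc EqRel π v (β ++ flat M ++ t.body) := by simpa [hu_eq, ht] using huv.symm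
        EqRel π _ (β ++ flat M ++ (w ++ x.pre)) := by simpa using hw.append_left (β ++ flat M)
        _ = _ := by simp
    · obtain ⟨w, hw⟩ := htx.2.1
      exact ⟨w, huv.symm.trans ((htu hpre).trans hw)⟩
  · have hpre : t.pre = [] := by
      by_contra hpre
      refine hL.not_eqRel_word_of_suffix_ne_nil (K := K ++ s :: M) (K' := K') (by simp [h]) ht hδ
        (u := u) (Z := flat K ++ α) ?_ (htu hpre)
      simpa [h, hs, ht, hu_eq] using hsf
    obtain rfl : x = ⟨t.pre ++ γ, δ, t.post⟩ := by
      simpa [Block.dropEmpty, hδ] using hx.symm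
    exact ⟨β ++ flat M, by simpa [hu_eq, hpre] using huv.symm⟩

theorem IsLinChain.ne_nil_of_prefix_ne_nil_of_suffix_ne_nil
    (hD₂ : AtMostTwoClasses π D)
    (hL : IsLinChain π D L) (h : L = K ++ s :: (M ++ t :: K')) (hsf : SFRel π (flat L))
    (hs : s.body = α ++ β) (ht : t.body = γ ++ δ) (hu : u ∈ D)
    (hu_eq : u = β ++ flat M ++ γ) (hα : α ≠ []) (hδ : δ ≠ []) : M ≠ [] := by
  rintro rfl
  rcases hL.eqRel_word_or_eqRel_word hD₂ (by simpa using h) hsf hu with hus | hut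
  · refine hL.not_eqRel_word_of_prefix_ne_nil h hs hα (u := u) (Z := δ ++ flat K') ?_ hus
    simpa [h, hs, ht, hu_eq] using hsf
  · refine hL.not_eqRel_word_of_suffix_ne_nil (K := K ++ [s]) (K' := K') (by simp [h]) ht hδ
      (u := u) (Z := flat K ++ α) ?_ hut
    simpa [h, hs, ht, hu_eq] using hsf

end Junction

theorem IsLinChain.exists_replace {π : List A → List A → Prop} {D : Set (List A)}
    {L : List (Block A)} {y u v z : List A}
    (hD : ∀ a ∈ D, ∀ b, EqRel π a b → b ∈ D)
    (hD₂ : AtMostTwoClasses π D)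
    (hL : IsLinChain π D L) (hflat : flat L = y ++ u ++ z) (hsf : SFRel π (y ++ u ++ z))
    (hu : u ∈ D) (huv : EqRel π u v) :
    ∃ L', IsLinChain π D L' ∧ L'.length ≤ L.length ∧ flat L' = y ++ v ++ z := by
  rcases eq_or_ne u [] with rfl | hu0
  · obtain rfl := (hsf.eq_nil_iff_eq_nil huv).mp rfl
    exact ⟨L, hL, le_rfl, hflat⟩
  have hv0 : v ≠ [] := mt (hsf.eq_nil_iff_eq_nil huv).mpr hu0
  rw [← hflat] at hsf
  rcases exists_of_flat_eq_append_append hflat hu0 with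
    ⟨K, s, K', α, δ, rfl, hs, rfl, rfl⟩ |
    ⟨K, s, M, t, K', α, β, γ, δ, rfl, hs, ht, hβ, hγ, rfl, rfl, rfl⟩
  · refine ⟨_, hL.replace_body hD rfl (b := α ++ v ++ δ) (by simp [hv0]) ?_, by simp, by simp⟩
    rw [hs]
    exact (huv.append_left α).append_right δ
  · refine ⟨_, hL.replace_span rfl hs ht hv0 (hD _ hu _ huv)
      (hL.left_linked_bare hD₂ rfl hsf hs ht hβ hu rfl huv)
      (hL.bare_linked_right hD₂ rfl hsf hs ht hγ hu rfl huv),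
      length_replace_span_le
        (hL.ne_nil_of_prefix_ne_nil_of_suffix_ne_nil hD₂ rfl hsf hs ht hu rfl),
      by simp⟩

section Bridge

variable {σ ρ : List A → List A → Prop} {x p q : ℕ → List A} {m : ℕ}

def blocksOf (x p q : ℕ → List A) (m : ℕ) : List (Block A) :=
  (List.range' 1 m).map fun i => ⟨p i, x i, q i⟩

theorem flat_blocksOf : flat (blocksOf x p q m) = wordSeg x 1 m := by
  simp [flat, blocksOf, wordSeg, Function.comp_def]

theorem exists_blocksOf_eq (L : List (Block A)) : ∃ x p q, blocksOf x p q L.length = L := by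
  let blk (i : ℕ) : Block A := L.getD (i - 1) ⟨[], [], []⟩
  refine ⟨fun i => (blk i).body, fun i => (blk i).pre, fun i => (blk i).post, ?_⟩
  refine List.ext_getElem (by simp [blocksOf]) fun k _ hk => ?_
  simp [blocksOf, blk, List.getElem?_eq_getElem hk]

theorem mem_blocksOf {t : Block A} :
    t ∈ blocksOf x p q m ↔ ∃ i, 1 ≤ i ∧ i ≤ m ∧ ⟨p i, x i, q i⟩ = t := by
  simp only [blocksOf, List.mem_map, List.mem_range'_1]
  exact ⟨fun ⟨i, hi, h⟩ => ⟨i, hi.1, by omega, h⟩, fun ⟨i, h₁, h₂, h⟩ => ⟨i, by omega, h⟩⟩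

theorem isChain_blocksOf_iff {π : List A → List A → Prop} :
    (blocksOf x p q m).IsChain (Linked π) ↔
      ∀ i, 1 ≤ i → i < m → Linked π ⟨p i, x i, q i⟩ ⟨p (i + 1), x (i + 1), q (i + 1)⟩ := by
  rw [blocksOf, List.isChain_map, List.isChain_iff_getElem]
  simp only [List.length_range', List.getElem_range']
  constructor
  · intro h i h₁ h₂
    simpa [show 1 + (i - 1) = i by omega, show 1 + (i - 1 + 1) = i + 1 by omega]
      using h (i - 1) (by omega)
  · intro h k hk
    simpa [add_comm, add_left_comm] using h (1 + k) (by omega) (by omega)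

theorem blocksOf_eq_nil_iff : blocksOf x p q m = [] ↔ m = 0 := by
  simp [blocksOf]

theorem head?_blocksOf (hm : 1 ≤ m) : (blocksOf x p q m).head? = some ⟨p 1, x 1, q 1⟩ := by
  obtain ⟨k, rfl⟩ : ∃ k, m = k + 1 := ⟨m - 1, by omega⟩
  simp [blocksOf, List.range'_succ]

theorem getLast?_blocksOf (hm : 1 ≤ m) :
    (blocksOf x p q m).getLast? = some ⟨p m, x m, q m⟩ := by
  obtain ⟨k, rfl⟩ : ∃ k, m = k + 1 := ⟨m - 1, by omega⟩
  simp [blocksOf, List.range'_concat, add_comm]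

theorem IsLinChain.isLinDecomp
    (hSim : ∀ a b, Sim σ ρ a b ↔ a ∈ DTau σ ρ ∧ EqRel (PiRel σ ρ) a b)
    (hL : IsLinChain (PiRel σ ρ) (DTau σ ρ) (blocksOf x p q m)) : IsLinDecomp σ ρ m x p q := by
  have hm : 1 ≤ m := Nat.one_le_iff_ne_zero.mpr (mt blocksOf_eq_nil_iff.mpr hL.ne_nil)
  have hmem : ∀ i, 1 ≤ i → i ≤ m → (⟨p i, x i, q i⟩ : Block A) ∈ blocksOf x p q m :=
    fun i h₁ h₂ => mem_blocksOf.mpr ⟨i, h₁, h₂, rfl⟩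
  have hword : ∀ i, 1 ≤ i → i ≤ m → p i ++ x i ++ q i ∈ DTau σ ρ :=
    fun i h₁ h₂ => hL.word_mem _ (hmem i h₁ h₂)
  have hp1 : p 1 = [] := hL.head_pre _ (head?_blocksOf hm)
  have hqm : q m = [] := hL.getLast_post _ (getLast?_blocksOf hm)
  have hlink := isChain_blocksOf_iff.mp hL.isChain
  have hpost : ∀ i, 1 < i → i ≤ m →
      ∃ r, EqRel (PiRel σ ρ) (p i ++ x i ++ q i) (q (i - 1) ++ r) := by
    intro i h₁ h₂
    simpa [Block.word, Nat.sub_add_cancel (by omega : 1 ≤ i)]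
      using (hlink (i - 1) (by omega) (by omega)).1
  choose! uu huu using hpost
  choose! vv hvv using fun i (h₁ : 1 ≤ i) (h₂ : i < m) => (hlink i h₁ h₂).2.1
  refine ⟨hm, fun i h₁ h₂ => hL.body_ne_nil _ (hmem i h₁ h₂),
    ⟨uu, vv, fun i h₁ h₂ => (hSim _ _).mpr ⟨hword i (by omega) h₂, huu i h₁ h₂⟩,
      fun i h₁ h₂ => (hSim _ _).mpr ⟨hword i h₁ (by omega), hvv i h₁ h₂⟩⟩,
    fun i h₁ h₂ => (hlink i h₁ h₂).2.2, hp1, hqm, fun h => ?_⟩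
  subst h
  simpa [hp1, hqm] using hword 1 le_rfl le_rfl

theorem IsLinDecomp.isLinChain_blocksOf
    (hSim : ∀ a b, Sim σ ρ a b ↔ a ∈ DTau σ ρ ∧ EqRel (PiRel σ ρ) a b)
    (h : IsLinDecomp σ ρ m x p q) : IsLinChain (PiRel σ ρ) (DTau σ ρ) (blocksOf x p q m) := by
  obtain ⟨hm, hne, ⟨uu, vv, hc, hv⟩, hd, hp1, hqm, h1⟩ := h
  have hword : ∀ i, 1 ≤ i → i ≤ m → p i ++ x i ++ q i ∈ DTau σ ρ := by
    intro i h₁ h₂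
    rcases h₁.lt_or_eq with h₁ | rfl
    · exact ((hSim _ _).mp (hc i h₁ h₂)).1
    · rcases h₂.lt_or_eq with h₂ | rfl
      · exact ((hSim _ _).mp (hv 1 le_rfl h₂)).1
      · simpa [hp1, hqm] using h1 rfl
  refine ⟨mt blocksOf_eq_nil_iff.mp (by omega), fun t ht => ?_, fun t ht => ?_,
    isChain_blocksOf_iff.mpr fun i h₁ h₂ => ⟨⟨uu (i + 1), ?_⟩,
      ⟨vv i, ((hSim _ _).mp (hv i h₁ h₂)).2⟩, hd i h₁ h₂⟩,
    by simpa [head?_blocksOf hm] using hp1, by simpa [getLast?_blocksOf hm] using hqm⟩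
  · obtain ⟨i, h₁, h₂, rfl⟩ := mem_blocksOf.mp ht
    exact hne i h₁ h₂
  · obtain ⟨i, h₁, h₂, rfl⟩ := mem_blocksOf.mp ht
    exact hword i h₁ h₂
  · simpa [Block.word] using ((hSim _ _).mp (hc (i + 1) (by omega) (by omega))).2

theorem mem_linSet_iff (hSim : ∀ a b, Sim σ ρ a b ↔ a ∈ DTau σ ρ ∧ EqRel (PiRel σ ρ) a b)
    {w : List A} {n : ℕ} :
    w ∈ LinSet σ ρ n ↔
      ∃ L, IsLinChain (PiRel σ ρ) (DTau σ ρ) L ∧ L.length ≤ n ∧ w = flat L := by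
  constructor
  · rintro ⟨m, -, hmn, x, p, q, hdec, rfl⟩
    exact ⟨blocksOf x p q m, hdec.isLinChain_blocksOf hSim, by simpa [blocksOf],
      flat_blocksOf.symm⟩
  · rintro ⟨L, hL, hLn, rfl⟩
    obtain ⟨x, p, q, hxpq⟩ := exists_blocksOf_eq L
    refine ⟨L.length, List.length_pos_of_ne_nil hL.ne_nil, hLn, x, p, q, ?_,
      by rw [← flat_blocksOf, hxpq]⟩
    rw [← hxpq] at hL
    exact hL.isLinDecomp hSim

end Bridge

theorem linSet_closed_under_sim_replacement_general {A : Type*} {nu nv : ℕ}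
    (u : Fin nu → List A) (v : Fin nv → List A)
    (σ ρ : List A → List A → Prop) (hσ : σ = FamilyRel u) (hρ : ρ = FamilyRel v)
    (hset : SettingHyps σ ρ)
    (n : ℕ) (y z u' v' : List A)
    (hsf : SFRel (PiRel σ ρ) (y ++ u' ++ z))
    (hlin : y ++ u' ++ z ∈ LinSet σ ρ n)
    (hsim : Sim σ ρ u' v') :
    y ++ v' ++ z ∈ LinSet σ ρ n := by
  have hSim : ∀ a b, Sim σ ρ a b ↔ a ∈ DTau σ ρ ∧ EqRel (PiRel σ ρ) a b :=
    fun _ _ => sim_iff hσ hρ hset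
  obtain ⟨hu', huv⟩ := (hSim u' v').mp hsim
  obtain ⟨L, hL, hLn, hflat⟩ := (mem_linSet_iff hSim).mp hlin
  obtain ⟨L', hL', hlen, hflat'⟩ := hL.exists_replace (fun _ ha _ => hset.mem_dTau ha)
    (atMostTwoClasses_dTau hσ hρ) hflat.symm hsf hu' huv
  exact (mem_linSet_iff hSim).mpr ⟨L', hL', hlen.trans hLn, hflat'.symm⟩

/-- Lemma 5: if `x = y·u·z ∈ SF(A,π) ∩ Lin(n)` and `u ~ v`,
then `y·v·z ∈ Lin(n)`. -/
theorem linSet_closed_under_sim_replacement {A : Type*} {nu nv : ℕ}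
    (u : Fin nu → List A) (v : Fin nv → List A)
    (hu : Function.Injective u) (hv : Function.Injective v)
    (σ ρ : List A → List A → Prop) (hσ : σ = FamilyRel u) (hρ : ρ = FamilyRel v)
    (hset : SettingHyps σ ρ)
    (n : ℕ) (y z u' v' : List A)
    (hsf : SFRel (PiRel σ ρ) (y ++ u' ++ z))
    (hlin : y ++ u' ++ z ∈ LinSet σ ρ n)
    (hsim : Sim σ ρ u' v') :
    y ++ v' ++ z ∈ LinSet σ ρ n :=
  linSet_closed_under_sim_replacement_general u v σ ρ hσ hρ hset n y z u' v' hsf hlin hsim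
end SqFreePaper
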